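/- Let F be a non-fragile connected GSC, and suppose (a,0) ∈ 𝒟 with (a−1,0) ∉ 𝒟 and (a+1,0) ∉ 𝒟. Then (a,0) is not a cut vertex of the first Hata graph Γ₁. -/

import Mathlib

open Set

/-- The map φ_d(x) = (x + d)/N on ℝ². -/
noncomputable def phi (N : ℕ) (d : ℕ × ℕ) (x : ℝ × ℝ) : ℝ × ℝ :=
  ((x.1 + d.1) / N, (x.2 + d.2) / N)

/-- The first Hata graph Γ₁: vertices are digits of D, with an edge between
distinct digits i, j iff φ_i(F) ∩ φ_j(F) ≠ ∅. -/
noncomputable def hata1 (N : ℕ) (D : Finset (ℕ × ℕ)) (F : Set (ℝ × ℝ)) :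
    SimpleGraph {d : ℕ × ℕ // d ∈ D} where
  Adj u v := u ≠ v ∧ (phi N u.val '' F ∩ phi N v.val '' F).Nonempty
  symm := by
    constructor
    intro u v h
    exact ⟨h.1.symm, by rw [Set.inter_comm]; exact h.2⟩
  loopless := by
    constructor
    intro u h
    exact h.1 rfl

/-- A connected GSC is fragile if the digit set splits into two nonempty parts
whose unions of level-1 cells meet in a single point. -/
def Fragile (N : ℕ) (D : Finset (ℕ × ℕ)) (F : Set (ℝ × ℝ)) : Prop :=
  ∃ D₁ D₂ : Finset (ℕ × ℕ), D₁ ∪ D₂ = D ∧ Disjoint D₁ D₂ ∧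
    D₁.Nonempty ∧ D₂.Nonempty ∧
    ∃ z : ℝ × ℝ, (⋃ d ∈ D₁, phi N d '' F) ∩ (⋃ d ∈ D₂, phi N d '' F) = {z}

lemma phi_cont (N : ℕ) (d : ℕ × ℕ) : Continuous (phi N d) := by
  unfold phi; fun_prop

lemma coord_bound (N : ℕ) (hN : 2 ≤ N) (D : Finset (ℕ × ℕ)) (F : Set (ℝ × ℝ))
    (hFne : F.Nonempty) (hFc : IsCompact F) (hFattr : F = ⋃ d ∈ D, phi N d '' F)
    (f : ℝ × ℝ → ℝ) (hf : Continuous f) (c : ℕ × ℕ → ℕ) (hc : ∀ d ∈ D, c d < N)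
    (hfc : ∀ d x, f (phi N d x) = (f x + c d) / N) :
    ∀ p ∈ F, 0 ≤ f p ∧ f p ≤ 1 := by
  have hN0 : (0:ℝ) < N := by positivity
  have hN1 : (2:ℝ) ≤ N := by exact_mod_cast hN
  obtain ⟨xM, hxM, hmax⟩ := hFc.exists_isMaxOn hFne hf.continuousOn
  obtain ⟨xm, hxm, hmin⟩ := hFc.exists_isMinOn hFne hf.continuousOn
  have h1 : f xM ≤ 1 := by
    have hx := hxM
    rw [hFattr] at hx
    simp only [mem_iUnion, mem_image] at hx
    obtain ⟨d, hd, y, hyF, rfl⟩ := hx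
    have hy : f y ≤ f (phi N d y) := hmax hyF
    have hcd : (c d : ℝ) ≤ N - 1 := by
      have h := hc d hd; have : (c d : ℝ) + 1 ≤ N := by exact_mod_cast h
      linarith
    rw [hfc, le_div_iff₀ hN0] at hy
    rw [hfc, div_le_one hN0]
    nlinarith
  have h0 : 0 ≤ f xm := by
    have hx := hxm
    rw [hFattr] at hx
    simp only [mem_iUnion, mem_image] at hx
    obtain ⟨d, hd, y, hyF, rfl⟩ := hx
    have hy : f (phi N d y) ≤ f y := hmin hyF
    have hcd : (0:ℝ) ≤ (c d : ℝ) := by positivity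
    rw [hfc, div_le_iff₀ hN0] at hy
    rw [hfc]
    have : 0 ≤ f y + c d := by nlinarith
    positivity
  intro p hp
  exact ⟨le_trans h0 (hmin hp), le_trans (hmax hp) h1⟩

lemma cell_bound (N : ℕ) (hN0 : (0:ℝ) < N) (F : Set (ℝ × ℝ))
    (hF01 : ∀ p ∈ F, (0 ≤ p.1 ∧ p.1 ≤ 1) ∧ (0 ≤ p.2 ∧ p.2 ≤ 1))
    (d : ℕ × ℕ) (z : ℝ × ℝ) (hz : z ∈ phi N d '' F) :
    ((d.1:ℝ)/N ≤ z.1 ∧ z.1 ≤ ((d.1:ℝ)+1)/N) ∧ ((d.2:ℝ)/N ≤ z.2 ∧ z.2 ≤ ((d.2:ℝ)+1)/N) := by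
  obtain ⟨y, hyF, rfl⟩ := hz
  obtain ⟨⟨h1,h2⟩,⟨h3,h4⟩⟩ := hF01 y hyF
  unfold phi
  constructor <;> constructor <;> simp only [] <;>
    (rw [div_le_div_iff₀ hN0 hN0]; nlinarith)

lemma nat_of_div_le (N : ℕ) (hN0 : (0:ℝ) < N) (p q : ℕ) (h : (p:ℝ)/N ≤ ((q:ℝ)+1)/N) :
    p ≤ q + 1 := by
  rw [div_le_div_iff₀ hN0 hN0] at h
  have : (p:ℝ) ≤ (q:ℝ)+1 := le_of_mul_le_mul_right h hN0
  exact_mod_cast this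

lemma nbr_class (N : ℕ) (hN0 : (0:ℝ) < N) (D : Finset (ℕ × ℕ)) (F : Set (ℝ × ℝ))
    (hF01 : ∀ p ∈ F, (0 ≤ p.1 ∧ p.1 ≤ 1) ∧ (0 ≤ p.2 ∧ p.2 ≤ 1))
    (a : ℕ) (hleft : ∀ b : ℕ, b + 1 = a → (b, 0) ∉ D) (hright : (a + 1, 0) ∉ D)
    (d : ℕ × ℕ) (hd : d ∈ D) (hne : d ≠ (a,0))
    (z : ℝ × ℝ) (hz1 : z ∈ phi N (a,0) '' F) (hz2 : z ∈ phi N d '' F) :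
    d.2 = 1 ∧ (d.1 + 1 = a ∨ d.1 = a ∨ d.1 = a + 1) := by
  obtain ⟨⟨a1,a2⟩,⟨a3,a4⟩⟩ := cell_bound N hN0 F hF01 (a,0) z hz1
  obtain ⟨⟨b1,b2⟩,⟨b3,b4⟩⟩ := cell_bound N hN0 F hF01 d z hz2
  simp only [] at a1 a2 a3 a4
  have h1 : d.1 ≤ a + 1 := nat_of_div_le N hN0 _ _ (le_trans b1 a2)
  have h2 : a ≤ d.1 + 1 := nat_of_div_le N hN0 _ _ (le_trans a1 b2)
  have h3 : d.2 ≤ 0 + 1 := nat_of_div_le N hN0 _ _ (le_trans b3 (by push_cast at a4 ⊢; linarith))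
  obtain ⟨d1, d2⟩ := d
  simp only [] at h1 h2 h3 hne ⊢
  have hd2 : d2 = 0 ∨ d2 = 1 := by omega
  rcases hd2 with rfl | rfl
  · exfalso
    have : d1 + 1 = a ∨ d1 = a ∨ d1 = a + 1 := by omega
    rcases this with h | h | h
    · exact hleft d1 h hd
    · exact hne (by rw [h])
    · exact hright (by rw [← h]; exact hd)
  · exact ⟨rfl, by omega⟩

lemma point_pin (N : ℕ) (hN0 : (0:ℝ) < N) (F : Set (ℝ × ℝ)) (d : ℕ × ℕ)
    (z : ℝ × ℝ) (hz : z ∈ phi N d '' F) (c1 c2 : ℝ)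
    (h1 : z.1 = ((d.1:ℝ) + c1)/N) (h2 : z.2 = ((d.2:ℝ) + c2)/N) :
    (c1, c2) ∈ F := by
  obtain ⟨y, hyF, rfl⟩ := hz
  have hNne : (N:ℝ) ≠ 0 := ne_of_gt hN0
  unfold phi at h1 h2
  simp only [] at h1 h2
  field_simp at h1 h2
  have : y = (c1, c2) := Prod.ext (by linarith) (by linarith)
  rwa [← this]

lemma cornerL (N : ℕ) (hN0 : (0:ℝ) < N) (F : Set (ℝ × ℝ))
    (hF01 : ∀ p ∈ F, (0 ≤ p.1 ∧ p.1 ≤ 1) ∧ (0 ≤ p.2 ∧ p.2 ≤ 1))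
    (a b : ℕ) (hb : b + 1 = a)
    (z : ℝ × ℝ) (hz1 : z ∈ phi N (a,0) '' F) (hz2 : z ∈ phi N (b,1) '' F) :
    z = ((a:ℝ)/N,  1/(N:ℝ)) ∧ ((0:ℝ),(1:ℝ)) ∈ F ∧ ((1:ℝ),(0:ℝ)) ∈ F := by
  obtain ⟨⟨a1,a2⟩,⟨a3,a4⟩⟩ := cell_bound N hN0 F hF01 (a,0) z hz1
  obtain ⟨⟨b1,b2⟩,⟨b3,b4⟩⟩ := cell_bound N hN0 F hF01 (b,1) z hz2
  simp only [] at a1 a2 a3 a4 b1 b2 b3 b4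
  have hba : (b:ℝ) + 1 = a := by exact_mod_cast hb
  have e1 : z.1 = (a:ℝ)/N := le_antisymm (by rw [← hba]; exact b2) a1
  have e2 : z.2 = 1/(N:ℝ) := le_antisymm (by push_cast at a4; linarith) (by push_cast at b3; linarith)
  refine ⟨Prod.ext e1 e2, ?_, ?_⟩
  · exact point_pin N hN0 F (a,0) z hz1 0 1 (by rw [e1]; push_cast; ring) (by rw [e2]; push_cast; ring)
  · exact point_pin N hN0 F (b,1) z hz2 1 0 (by rw [e1, ← hba]) (by rw [e2]; push_cast; ring)

lemma cornerR (N : ℕ) (hN0 : (0:ℝ) < N) (F : Set (ℝ × ℝ))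
    (hF01 : ∀ p ∈ F, (0 ≤ p.1 ∧ p.1 ≤ 1) ∧ (0 ≤ p.2 ∧ p.2 ≤ 1))
    (a : ℕ)
    (z : ℝ × ℝ) (hz1 : z ∈ phi N (a,0) '' F) (hz2 : z ∈ phi N (a+1,1) '' F) :
    z = (((a:ℝ)+1)/N,  1/(N:ℝ)) ∧ ((1:ℝ),(1:ℝ)) ∈ F ∧ ((0:ℝ),(0:ℝ)) ∈ F := by
  obtain ⟨⟨a1,a2⟩,⟨a3,a4⟩⟩ := cell_bound N hN0 F hF01 (a,0) z hz1
  obtain ⟨⟨b1,b2⟩,⟨b3,b4⟩⟩ := cell_bound N hN0 F hF01 (a+1,1) z hz2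
  simp only [] at a1 a2 a3 a4 b1 b2 b3 b4
  have e1 : z.1 = ((a:ℝ)+1)/N := le_antisymm a2 (by push_cast at b1; linarith)
  have e2 : z.2 = 1/(N:ℝ) := le_antisymm (by push_cast at a4; linarith) (by push_cast at b3; linarith)
  refine ⟨Prod.ext e1 e2, ?_, ?_⟩
  · exact point_pin N hN0 F (a,0) z hz1 1 1 (by rw [e1]) (by rw [e2]; push_cast; ring)
  · exact point_pin N hN0 F (a+1,1) z hz2 0 0 (by rw [e1]; push_cast; ring) (by rw [e2]; push_cast; ring)

lemma split_lemma (N : ℕ) (D : Finset (ℕ × ℕ)) (F : Set (ℝ × ℝ))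
    (hFne : F.Nonempty) (hFc : IsCompact F)
    (hFattr : F = ⋃ d ∈ D, phi N d '' F) (hFconn : IsConnected F)
    (A B : Finset (ℕ × ℕ)) (hU : A ∪ B = D) (hA : A.Nonempty) (hB : B.Nonempty)
    (hI : (⋃ d ∈ (A:Finset (ℕ×ℕ)), phi N d '' F) ∩ (⋃ d ∈ B, phi N d '' F) = ∅) : False := by
  set SA := ⋃ d ∈ A, phi N d '' F with hSA
  set SB := ⋃ d ∈ B, phi N d '' F with hSB
  have hcell : ∀ d : ℕ × ℕ, IsCompact (phi N d '' F) := fun d => hFc.image (phi_cont N d)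
  have hcA : IsCompact SA := A.finite_toSet.isCompact_biUnion (fun d _ => hcell d)
  have hcB : IsCompact SB := B.finite_toSet.isCompact_biUnion (fun d _ => hcell d)
  have hsub : ∀ d ∈ D, phi N d '' F ⊆ F := by
    intro d hd z hz
    rw [hFattr]
    exact mem_biUnion hd hz
  have hFAB : F ⊆ SA ∪ SB := by
    rw [hFattr]
    intro z hz
    simp only [mem_iUnion] at hz
    obtain ⟨d, hd, hzd⟩ := hz
    rw [← hU, Finset.mem_union] at hd
    rcases hd with h | h
    · exact Or.inl (mem_biUnion h hzd)
    · exact Or.inr (mem_biUnion h hzd)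
  have hAF : SA ⊆ F := by
    intro z hz
    simp only [hSA, mem_iUnion] at hz
    obtain ⟨d, hd, hzd⟩ := hz
    exact hsub d (by rw [← hU]; exact Finset.mem_union_left _ hd) hzd
  have hBF : SB ⊆ F := by
    intro z hz
    simp only [hSB, mem_iUnion] at hz
    obtain ⟨d, hd, hzd⟩ := hz
    exact hsub d (by rw [← hU]; exact Finset.mem_union_right _ hd) hzd
  have hAne : SA.Nonempty := by
    obtain ⟨d, hd⟩ := hA
    obtain ⟨x, hx⟩ := hFne
    exact ⟨phi N d x, mem_biUnion hd ⟨x, hx, rfl⟩⟩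
  have hBne : SB.Nonempty := by
    obtain ⟨d, hd⟩ := hB
    obtain ⟨x, hx⟩ := hFne
    exact ⟨phi N d x, mem_biUnion hd ⟨x, hx, rfl⟩⟩
  have := (isPreconnected_closed_iff.mp hFconn.isPreconnected) SA SB
    hcA.isClosed hcB.isClosed hFAB
    ⟨hAne.choose, hAF hAne.choose_spec, hAne.choose_spec⟩
    ⟨hBne.choose, hBF hBne.choose_spec, hBne.choose_spec⟩
  obtain ⟨z, _, hzA, hzB⟩ := this
  exact absurd hI (by intro h; have hm : z ∈ SA ∩ SB := ⟨hzA, hzB⟩; rw [h] at hm; exact hm)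
lemma core (N : ℕ) (hN : 2 ≤ N) (D : Finset (ℕ × ℕ))
    (hD : ∀ d ∈ D, d.1 < N ∧ d.2 < N)
    (F : Set (ℝ × ℝ)) (hFne : F.Nonempty) (hFc : IsCompact F)
    (hFattr : F = ⋃ d ∈ D, phi N d '' F) (hFconn : IsConnected F)
    (hnf : ¬ Fragile N D F)
    (a : ℕ) (ha : (a, 0) ∈ D)
    (hleft : ∀ b : ℕ, b + 1 = a → (b, 0) ∉ D)
    (hright : (a + 1, 0) ∉ D)
    (u v : ↥{v : {d : ℕ × ℕ // d ∈ D} | v.val ≠ (a, 0)})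
    (huv : ¬ ((hata1 N D F).induce {v : {d : ℕ × ℕ // d ∈ D} | v.val ≠ (a, 0)}).Reachable u v)
    (hM : ∀ (m : ↥{v : {d : ℕ × ℕ // d ∈ D} | v.val ≠ (a, 0)}), m.val.val = ((a,1) : ℕ × ℕ) →
      ((hata1 N D F).induce {v : {d : ℕ × ℕ // d ∈ D} | v.val ≠ (a, 0)}).Reachable u m) :
    False := by
  classical
  let S : Set {d : ℕ × ℕ // d ∈ D} := {v | v.val ≠ (a, 0)}
  let G := (hata1 N D F).induce S
  have hN0 : (0:ℝ) < N := by
    have : 0 < N := by omega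
    exact_mod_cast this
  have hF01 : ∀ p ∈ F, (0 ≤ p.1 ∧ p.1 ≤ 1) ∧ (0 ≤ p.2 ∧ p.2 ≤ 1) := by
    have h1 := coord_bound N hN D F hFne hFc hFattr (fun p => p.1) continuous_fst
      (fun d => d.1) (fun d hd => (hD d hd).1) (fun d x => rfl)
    have h2 := coord_bound N hN D F hFne hFc hFattr (fun p => p.2) continuous_snd
      (fun d => d.2) (fun d hd => (hD d hd).2) (fun d x => rfl)
    exact fun p hp => ⟨h1 p hp, h2 p hp⟩
  let P : ℕ × ℕ → Prop :=
    fun d => ∀ (h1 : d ∈ D) (h2 : (⟨d, h1⟩ : {d : ℕ × ℕ // d ∈ D}) ∈ S),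
      G.Reachable u ⟨⟨d, h1⟩, h2⟩
  let C₁ : Finset (ℕ × ℕ) := (D.erase (a,0)).filter P
  let C₂ : Finset (ℕ × ℕ) := (D.erase (a,0)) \ C₁
  have hmemC₁ : ∀ w : ↥S, (w.val.val ∈ C₁ ↔ G.Reachable u w) := by
    intro w
    constructor
    · intro hw
      have h := (Finset.mem_filter.mp hw).2 w.val.property w.property
      exact h
    · intro hw
      refine Finset.mem_filter.mpr ⟨Finset.mem_erase.mpr ⟨w.property, w.val.property⟩, ?_⟩
      intro h1 h2
      have he : (⟨⟨w.val.val, h1⟩, h2⟩ : ↥S) = w := Subtype.ext (Subtype.ext rfl)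
      rw [he]; exact hw
  have hC₁D : ∀ d ∈ C₁, d ∈ D ∧ d ≠ (a,0) := by
    intro d hd
    have h := Finset.mem_erase.mp (Finset.mem_of_mem_filter d hd)
    exact ⟨h.2, h.1⟩
  have hC₂D : ∀ d ∈ C₂, d ∈ D ∧ d ≠ (a,0) := by
    intro d hd
    have h := Finset.mem_erase.mp (Finset.mem_sdiff.mp hd).1
    exact ⟨h.2, h.1⟩
  have hu1 : u.val.val ∈ C₁ := (hmemC₁ u).mpr (SimpleGraph.Reachable.refl u)
  have hv2 : v.val.val ∈ C₂ := by
    refine Finset.mem_sdiff.mpr ⟨Finset.mem_erase.mpr ⟨v.property, v.val.property⟩, ?_⟩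
    intro hc
    exact huv ((hmemC₁ v).mp hc)
  have hMnot : ((a,1) : ℕ × ℕ) ∉ C₂ := by
    intro hc
    obtain ⟨hMD, -⟩ := hC₂D _ hc
    have hmS : (⟨(a,1), hMD⟩ : {d : ℕ × ℕ // d ∈ D}) ∈ S := by
      show ((a,1) : ℕ × ℕ) ≠ (a,0)
      intro h
      exact absurd (congrArg Prod.snd h) one_ne_zero
    have hr := hM ⟨⟨(a,1), hMD⟩, hmS⟩ rfl
    have : ((a,1) : ℕ × ℕ) ∈ C₁ := (hmemC₁ ⟨⟨(a,1), hMD⟩, hmS⟩).mpr hr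
    exact (Finset.mem_sdiff.mp hc).2 this
  have hcross : ∀ d ∈ C₁, ∀ e ∈ C₂, ∀ z : ℝ × ℝ,
      z ∈ phi N d '' F → z ∈ phi N e '' F → False := by
    intro d hd e he z hzd hze
    obtain ⟨hdD, hdne⟩ := hC₁D d hd
    obtain ⟨heD, hene⟩ := hC₂D e he
    have hde : d ≠ e := by
      intro h
      exact (Finset.mem_sdiff.mp he).2 (h ▸ hd)
    have hdS : (⟨d, hdD⟩ : {d : ℕ × ℕ // d ∈ D}) ∈ S := hdne
    have heS : (⟨e, heD⟩ : {d : ℕ × ℕ // d ∈ D}) ∈ S := hene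
    have hadj : G.Adj ⟨⟨d, hdD⟩, hdS⟩ ⟨⟨e, heD⟩, heS⟩ := by
      show (hata1 N D F).Adj ⟨d, hdD⟩ ⟨e, heD⟩
      exact ⟨fun h => hde (congrArg Subtype.val h), ⟨z, hzd, hze⟩⟩
    have r1 : G.Reachable u ⟨⟨d, hdD⟩, hdS⟩ := (hmemC₁ ⟨⟨d, hdD⟩, hdS⟩).mp hd
    have r2 : G.Reachable u ⟨⟨e, heD⟩, heS⟩ := r1.trans hadj.reachable
    exact (Finset.mem_sdiff.mp he).2 ((hmemC₁ ⟨⟨e, heD⟩, heS⟩).mpr r2)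
  have hC₁ne : C₁.Nonempty := ⟨u.val.val, hu1⟩
  have hC₂ne : C₂.Nonempty := ⟨v.val.val, hv2⟩
  have hunion : C₁ ∪ C₂ = D.erase (a,0) :=
    Finset.union_sdiff_of_subset (Finset.filter_subset _ _)
  have hunionD1 : insert (a,0) C₁ ∪ C₂ = D := by
    rw [Finset.insert_union, hunion, Finset.insert_erase ha]
  have hunionD2 : insert (a,0) C₂ ∪ C₁ = D := by
    rw [Finset.insert_union, Finset.union_comm, hunion, Finset.insert_erase ha]
  set S₂ : Set (ℝ × ℝ) := (phi N (a,0) '' F) ∩ ⋃ d ∈ C₂, phi N d '' F with hS₂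
  have hS₂ne : S₂.Nonempty := by
    by_contra hS2
    rw [Set.not_nonempty_iff_eq_empty] at hS2
    refine split_lemma N D F hFne hFc hFattr hFconn (insert (a,0) C₁) C₂ hunionD1
      (Finset.insert_nonempty _ _) hC₂ne ?_
    rw [Set.eq_empty_iff_forall_notMem]
    rintro z ⟨hz1, hz2⟩
    simp only [mem_iUnion] at hz1 hz2
    obtain ⟨d, hd, hzd⟩ := hz1
    obtain ⟨e, he, hze⟩ := hz2
    rcases Finset.mem_insert.mp hd with rfl | hd'
    · have : z ∈ S₂ := ⟨hzd, mem_biUnion he hze⟩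
      rw [hS2] at this
      exact this
    · exact hcross d hd' e he z hzd hze
  have hS₂two : ∃ z₁ ∈ S₂, ∃ z₂ ∈ S₂, z₁ ≠ z₂ := by
    by_contra hsub
    push_neg at hsub
    obtain ⟨z₀, hz₀⟩ := hS₂ne
    apply hnf
    refine ⟨insert (a,0) C₁, C₂, hunionD1, ?_, Finset.insert_nonempty _ _, hC₂ne, z₀, ?_⟩
    · rw [Finset.disjoint_left]
      intro x hx hx2
      rcases Finset.mem_insert.mp hx with rfl | hx'
      · exact ((Finset.mem_erase.mp (Finset.mem_sdiff.mp hx2).1).1) rfl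
      · exact (Finset.mem_sdiff.mp hx2).2 hx'
    · ext z
      simp only [Set.mem_singleton_iff]
      constructor
      · rintro ⟨hz1, hz2⟩
        simp only [mem_iUnion] at hz1 hz2
        obtain ⟨d, hd, hzd⟩ := hz1
        obtain ⟨e, he, hze⟩ := hz2
        rcases Finset.mem_insert.mp hd with rfl | hd'
        · exact hsub z ⟨hzd, mem_biUnion he hze⟩ z₀ hz₀
        · exact (hcross d hd' e he z hzd hze).elim
      · rintro rfl
        obtain ⟨hza, hzb⟩ := hz₀
        exact ⟨mem_biUnion (Finset.mem_insert_self _ _) hza, hzb⟩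
  have hclass : ∀ z ∈ S₂,
      (∃ b, b + 1 = a ∧ ((b,1) : ℕ × ℕ) ∈ C₂ ∧ z = ((a:ℝ)/N, 1/(N:ℝ)) ∧
        ((0:ℝ),(1:ℝ)) ∈ F ∧ ((1:ℝ),(0:ℝ)) ∈ F) ∨
      (((a+1,1) : ℕ × ℕ) ∈ C₂ ∧ z = (((a:ℝ)+1)/N, 1/(N:ℝ)) ∧
        ((1:ℝ),(1:ℝ)) ∈ F ∧ ((0:ℝ),(0:ℝ)) ∈ F) := by
    rintro z ⟨hz0, hzC⟩
    simp only [mem_iUnion] at hzC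
    obtain ⟨d, hdC2, hzd⟩ := hzC
    obtain ⟨hdD, hdne⟩ := hC₂D d hdC2
    obtain ⟨hd2, hd1⟩ := nbr_class N hN0 D F hF01 a hleft hright d hdD hdne z hz0 hzd
    obtain ⟨d1, d2⟩ := d
    simp only [] at hd2 hd1
    subst hd2
    rcases hd1 with h | h | h
    · left
      obtain ⟨he, h01, h10⟩ := cornerL N hN0 F hF01 a d1 h z hz0 hzd
      exact ⟨d1, h, hdC2, he, h01, h10⟩
    · subst h
      exact absurd hdC2 hMnot
    · right
      subst h
      obtain ⟨he, h11, h00⟩ := cornerR N hN0 F hF01 a z hz0 hzd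
      exact ⟨hdC2, he, h11, h00⟩
  obtain ⟨z₁, hz₁, z₂, hz₂, hzne⟩ := hS₂two
  have hcorner : ∃ b, b + 1 = a ∧ ((b,1) : ℕ × ℕ) ∈ C₂ ∧ ((a+1,1) : ℕ × ℕ) ∈ C₂ ∧
      ((0:ℝ),(1:ℝ)) ∈ F ∧ ((1:ℝ),(0:ℝ)) ∈ F ∧ ((1:ℝ),(1:ℝ)) ∈ F ∧ ((0:ℝ),(0:ℝ)) ∈ F := by
    rcases hclass z₁ hz₁ with ⟨b, hb, hbC, he1, h01, h10⟩ | ⟨hRC, he1, h11, h00⟩ <;>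
      rcases hclass z₂ hz₂ with ⟨b', hb', hbC', he2, h01', h10'⟩ | ⟨hRC', he2, h11', h00'⟩
    · exact absurd (he1.trans he2.symm) hzne
    · exact ⟨b, hb, hbC, hRC', h01, h10, h11', h00'⟩
    · exact ⟨b', hb', hbC', hRC, h01', h10', h11, h00⟩
    · exact absurd (he1.trans he2.symm) hzne
  obtain ⟨b, hb, hbC₂, hRC₂, h01, h10, h11, h00⟩ := hcorner
  -- S₁ is nonempty
  set S₁ : Set (ℝ × ℝ) := (phi N (a,0) '' F) ∩ ⋃ d ∈ C₁, phi N d '' F with hS₁def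
  have hS₁ne : S₁.Nonempty := by
    by_contra hS1
    rw [Set.not_nonempty_iff_eq_empty] at hS1
    refine split_lemma N D F hFne hFc hFattr hFconn (insert (a,0) C₂) C₁ hunionD2
      (Finset.insert_nonempty _ _) hC₁ne ?_
    rw [Set.eq_empty_iff_forall_notMem]
    rintro z ⟨hz1, hz2⟩
    simp only [mem_iUnion] at hz1 hz2
    obtain ⟨d, hd, hzd⟩ := hz1
    obtain ⟨e, he, hze⟩ := hz2
    rcases Finset.mem_insert.mp hd with rfl | hd'
    · have : z ∈ S₁ := ⟨hzd, mem_biUnion he hze⟩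
      rw [hS1] at this
      exact this
    · exact hcross e he d hd' z hze hzd
  obtain ⟨w, hw0, hwC⟩ := hS₁ne
  simp only [mem_iUnion] at hwC
  obtain ⟨e, heC1, hwe⟩ := hwC
  obtain ⟨heD, hene⟩ := hC₁D e heC1
  obtain ⟨he2, he1⟩ := nbr_class N hN0 D F hF01 a hleft hright e heD hene w hw0 hwe
  have hdisj12 : ∀ x ∈ C₁, x ∉ C₂ := fun x hx hx2 => (Finset.mem_sdiff.mp hx2).2 hx
  have heM : e = ((a,1) : ℕ × ℕ) := by
    rcases he1 with h | h | h
    · exfalso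
      have hh : e = ((b,1) : ℕ × ℕ) := Prod.ext (by omega) he2
      rw [hh] at heC1
      exact hdisj12 _ heC1 hbC₂
    · exact Prod.ext h he2
    · exfalso
      have hh : e = ((a+1,1) : ℕ × ℕ) := Prod.ext h he2
      rw [hh] at heC1
      exact hdisj12 _ heC1 hRC₂
  rw [heM] at heC1
  -- final contradiction: cells of (a,1) ∈ C₁ and (b,1) ∈ C₂ share the point (a/N, 1/N)
  have hpL1 : ((a:ℝ)/N, 1/(N:ℝ)) ∈ phi N (a,1) '' F := by
    refine ⟨((0:ℝ),(0:ℝ)), h00, ?_⟩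
    unfold phi
    refine Prod.ext ?_ ?_ <;> (simp only []; push_cast; ring)
  have hpL2 : ((a:ℝ)/N, 1/(N:ℝ)) ∈ phi N (b,1) '' F := by
    refine ⟨((1:ℝ),(0:ℝ)), h10, ?_⟩
    have hba : (b:ℝ) + 1 = a := by exact_mod_cast hb
    unfold phi
    refine Prod.ext ?_ ?_
    · simp only []; push_cast; rw [← hba]; ring
    · simp only []; norm_num
  exact hcross (a,1) heC1 (b,1) hbC₂ _ hpL1 hpL2

/-- If F is a non-fragile connected GSC, (a,0) ∈ 𝒟, and neither (a−1,0) nor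
(a+1,0) belongs to 𝒟, then (a,0) is not a cut vertex of Γ₁, i.e. Γ₁ − {(a,0)}
is connected. -/
theorem stmt14 (N : ℕ) (hN : 2 ≤ N) (D : Finset (ℕ × ℕ))
    (hD : ∀ d ∈ D, d.1 < N ∧ d.2 < N) (hDcard : 1 < D.card ∧ D.card < N ^ 2)
    (F : Set (ℝ × ℝ)) (hFne : F.Nonempty) (hFc : IsCompact F)
    (hFattr : F = ⋃ d ∈ D, phi N d '' F) (hFconn : IsConnected F)
    (hnf : ¬ Fragile N D F)
    (a : ℕ) (ha : (a, 0) ∈ D)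
    (hleft : ∀ b : ℕ, b + 1 = a → (b, 0) ∉ D)
    (hright : (a + 1, 0) ∉ D) :
    ((hata1 N D F).induce {v : {d : ℕ × ℕ // d ∈ D} | v.val ≠ (a, 0)}).Connected := by
  classical
  rw [SimpleGraph.connected_iff]
  constructor
  · intro u v
    by_contra huv
    by_cases hMD : ((a,1) : ℕ × ℕ) ∈ D
    · have hmS : (⟨(a,1), hMD⟩ : {d : ℕ × ℕ // d ∈ D}) ∈
          {v : {d : ℕ × ℕ // d ∈ D} | v.val ≠ (a, 0)} := by
        intro h
        exact absurd (congrArg Prod.snd h) one_ne_zero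
      set m : ↥{v : {d : ℕ × ℕ // d ∈ D} | v.val ≠ (a, 0)} := ⟨⟨(a,1), hMD⟩, hmS⟩ with hm
      by_cases hr :
          ((hata1 N D F).induce {v : {d : ℕ × ℕ // d ∈ D} | v.val ≠ (a, 0)}).Reachable u m
      · refine core N hN D hD F hFne hFc hFattr hFconn hnf a ha hleft hright u v huv ?_
        intro m' hm'
        have : m' = m := Subtype.ext (Subtype.ext hm')
        rw [this]
        exact hr
      · refine core N hN D hD F hFne hFc hFattr hFconn hnf a ha hleft hright m u
          (fun h => hr h.symm) ?_
        intro m' hm'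
        have : m' = m := Subtype.ext (Subtype.ext hm')
        rw [this]
    · refine core N hN D hD F hFne hFc hFattr hFconn hnf a ha hleft hright u v huv ?_
      intro m' hm'
      exact absurd (hm' ▸ m'.val.property) hMD
  · obtain ⟨d, hdD, hdne⟩ := Finset.exists_mem_ne hDcard.1 (a, 0)
    exact ⟨⟨⟨d, hdD⟩, hdne⟩⟩
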